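/- arXiv:2212.14632 — 7 statements merged into one kernel-verified Lean document; each statement's English description precedes it below -/
import Mathlib

section
/- For every R ∈ SO(3), ‖Υ(R)‖² = 4(1 − ‖R‖_I)‖R‖_I, where ‖·‖ is the Euclidean norm on ℝ³. -/
open Matrix Filter

noncomputable section

/-- Skew-symmetric matrix of a vector: `skew ω *ᵥ v = ω ×₃ v`. -/
def skew (ω : Fin 3 → ℝ) : Matrix (Fin 3) (Fin 3) ℝ :=
  !![0, -ω 2, ω 1; ω 2, 0, -ω 0; -ω 1, ω 0, 0]

/-- Inverse of `skew` on skew-symmetric matrices. -/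
def vex (M : Matrix (Fin 3) (Fin 3) ℝ) : Fin 3 → ℝ :=
  ![M 2 1, M 0 2, M 1 0]

/-- Anti-symmetric projection `P_a(M) = (M - Mᵀ)/2`. -/
def Pa (M : Matrix (Fin 3) (Fin 3) ℝ) : Matrix (Fin 3) (Fin 3) ℝ :=
  (1 / 2 : ℝ) • (M - Mᵀ)

/-- `Υ(M) = vex (P_a M)`. -/
def Upsilon (M : Matrix (Fin 3) (Fin 3) ℝ) : Fin 3 → ℝ := vex (Pa M)

/-- `R ∈ SO(3)`. -/
def SO3 (R : Matrix (Fin 3) (Fin 3) ℝ) : Prop :=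
  R * Rᵀ = 1 ∧ Rᵀ * R = 1 ∧ R.det = 1

/-- `‖R‖_I = Tr(I₃ - R)/4`. -/
def normI (R : Matrix (Fin 3) (Fin 3) ℝ) : ℝ := Matrix.trace (1 - R) / 4

/-- Squared Euclidean norm of a vector of `ℝ³`. -/
def sqnorm (v : Fin 3 → ℝ) : ℝ := ∑ i, v i ^ 2

/-! For `R ∈ SO(3)` with `t = Tr R`, the squared norm of `Υ(R)` is an eighth of the squared
Frobenius norm of `R - Rᵀ`, which orthogonality turns into `(6 - 2 Tr R²) / 8`. Newton's identity
`Tr R² = t² - 2 Tr (adj R)` together with `adj R = Rᵀ` gives `Tr R² = t² - 2t`, hence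
`‖Υ(R)‖² = (1 + t)(3 - t) / 4`, which is `4 (1 - ‖R‖_I) ‖R‖_I` since `‖R‖_I = (3 - t) / 4`. -/

theorem Matrix.trace_mul_self_fin_three {α : Type*} [CommRing α] (M : Matrix (Fin 3) (Fin 3) α) :
    trace (M * M) = trace M ^ 2 - 2 * trace M.adjugate := by
  simp only [trace_fin_three, adjugate_fin_three, mul_apply, Fin.sum_univ_three, of_apply,
    cons_val', cons_val_zero, cons_val_one, cons_val_two, empty_val', cons_val_fin_one,
    head_cons, tail_cons, head_fin_const]
  ring

theorem Matrix.adjugate_eq_transpose_of_mul_transpose_eq_one {n α : Type*} [Fintype n]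
    [DecidableEq n] [CommRing α] {R : Matrix n n α} (hR : R * Rᵀ = 1) (hdet : R.det = 1) :
    R.adjugate = Rᵀ := by
  calc R.adjugate = R.adjugate * R * Rᵀ := by rw [Matrix.mul_assoc, hR, Matrix.mul_one]
    _ = Rᵀ := by rw [adjugate_mul, hdet, one_smul, Matrix.one_mul]

theorem Matrix.trace_sub_transpose_mul_transpose {n α : Type*} [Fintype n] [DecidableEq n]
    [CommRing α] {R : Matrix n n α} (h₁ : R * Rᵀ = 1) (h₂ : Rᵀ * R = 1) :
    trace ((R - Rᵀ) * (R - Rᵀ)ᵀ) = 2 * Fintype.card n - 2 * trace (R * R) := by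
  have hRR : trace (Rᵀ * Rᵀ) = trace (R * R) := by rw [← transpose_mul, trace_transpose]
  rw [transpose_sub, transpose_transpose, sub_mul, mul_sub, mul_sub, h₁, h₂, trace_sub, trace_sub,
    trace_sub, hRR, trace_one]
  ring

theorem sqnorm_Upsilon (M : Matrix (Fin 3) (Fin 3) ℝ) :
    sqnorm (Upsilon M) = trace ((M - Mᵀ) * (M - Mᵀ)ᵀ) / 8 := by
  simp only [sqnorm, Upsilon, vex, Pa, trace_fin_three, mul_apply, Fin.sum_univ_three,
    Matrix.sub_apply, Matrix.smul_apply, transpose_apply, smul_eq_mul, cons_val_zero, cons_val_one,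
    cons_val_two, head_cons, tail_cons]
  ring

theorem normI_eq (R : Matrix (Fin 3) (Fin 3) ℝ) : normI R = (3 - trace R) / 4 := by
  rw [normI, trace_sub, trace_one, Fintype.card_fin]
  norm_num

theorem sqnorm_Upsilon_eq (R : Matrix (Fin 3) (Fin 3) ℝ) (hR : SO3 R) :
    sqnorm (Upsilon R) = 4 * (1 - normI R) * normI R := by
  obtain ⟨h₁, h₂, hdet⟩ := hR
  have htrace_sq : trace (R * R) = trace R ^ 2 - 2 * trace R := by
    rw [trace_mul_self_fin_three, adjugate_eq_transpose_of_mul_transpose_eq_one h₁ hdet,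
      trace_transpose]
  rw [sqnorm_Upsilon, trace_sub_transpose_mul_transpose h₁ h₂, htrace_sq, normI_eq,
    Fintype.card_fin]
  ring
end
end

section
/- (Barbalat Lemma extension) Let x : [0,∞) → ℝⁿ be differentiable with ẋ(t) = f(t) + g(t), where f : [0,∞) → ℝⁿ is uniformly continuous. If x(t) converges to a constant k_c as t → ∞ and g(t) → 0 as t → ∞, then ẋ(t) → 0 as t → ∞. -/
/-!
Fix `ε` and let `L` be a time step on which `f` varies by less than `ε / 4`. For late `a`,
`ẋ = f + g` stays within `ε / 2` of `f a` on `[a, a + L]`, so by the mean value inequality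
`x (a + L) - x a` is within `L ε / 2` of `L • f a`. Since `x` converges, `x (a + L) - x a → 0`,
which forces `‖f a‖ < ε` eventually; hence `f → 0`, and `ẋ = f + g → 0` with it.
-/

open Matrix Filter

noncomputable section

open Set Topology

section

variable {E : Type*} [NormedAddCommGroup E] [NormedSpace ℝ E]

theorem norm_sub_sub_smul_le_of_norm_deriv_sub_le {x x' : ℝ → E} {a b C : ℝ} {v : E}
    (hab : a ≤ b) (hx : ∀ t ∈ Icc a b, HasDerivWithinAt x (x' t) (Icc a b) t)
    (hC : ∀ t ∈ Ico a b, ‖x' t - v‖ ≤ C) :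
    ‖x b - x a - (b - a) • v‖ ≤ C * (b - a) := by
  have hz : ∀ t ∈ Icc a b, HasDerivWithinAt (fun t => x t - t • v) (x' t - v) (Icc a b) t :=
    fun t ht => by
      have h := (hx t ht).sub ((hasDerivAt_id' t).smul_const v).hasDerivWithinAt
      rwa [one_smul] at h
  convert norm_image_sub_le_of_norm_deriv_le_segment' hz hC b (right_mem_Icc.mpr hab) using 2
  rw [sub_smul]
  abel

theorem tendsto_nhds_zero_of_hasDerivWithinAt_add_of_uniformContinuousOn
    {x f g : ℝ → E} {s : ℝ} {k : E}
    (hderiv : ∀ t ∈ Ici s, HasDerivWithinAt x (f t + g t) (Ici s) t)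
    (hf : UniformContinuousOn f (Ici s)) (hx : Tendsto x atTop (𝓝 k))
    (hg : Tendsto g atTop (𝓝 0)) :
    Tendsto f atTop (𝓝 0) := by
  rw [NormedAddGroup.tendsto_nhds_zero] at hg ⊢
  intro ε hε
  obtain ⟨δ, hδ, hfδ⟩ := Metric.uniformContinuousOn_iff.mp hf (ε / 4) (by positivity)
  set L := δ / 2 with hL
  have hL0 : 0 < L := by positivity
  have hshift : Tendsto (fun t => x (t + L) - x t) atTop (𝓝 0) := by
    simpa using (hx.comp (tendsto_atTop_add_const_right _ L tendsto_id)).sub hx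
  obtain ⟨T, hT⟩ := eventually_atTop.mp (hg (ε / 4) (by positivity))
  filter_upwards [eventually_ge_atTop (max s T),
    NormedAddGroup.tendsto_nhds_zero.mp hshift (ε / 4 * L) (by positivity)] with a ha hxa
  have hsub : Icc a (a + L) ⊆ Ici s := fun t ht => (le_of_max_le_left ha).trans ht.1
  have hderiv_bound : ∀ t ∈ Ico a (a + L), ‖f t + g t - f a‖ ≤ ε / 2 := by
    intro t ht
    have hft : ‖f t - f a‖ < ε / 4 := by
      rw [← dist_eq_norm]
      refine hfδ t (hsub (Ico_subset_Icc_self ht)) a (hsub (left_mem_Icc.mpr (by linarith))) ?_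
      rw [Real.dist_eq, abs_of_nonneg (by linarith [ht.1])]
      linarith [ht.2]
    have hgt : ‖g t‖ < ε / 4 := hT t ((le_of_max_le_right ha).trans ht.1)
    calc ‖f t + g t - f a‖ = ‖(f t - f a) + g t‖ := by rw [add_sub_right_comm]
      _ ≤ ‖f t - f a‖ + ‖g t‖ := norm_add_le _ _
      _ ≤ ε / 2 := by linarith
  have hmv := norm_sub_sub_smul_le_of_norm_deriv_sub_le (by linarith)
    (fun t ht => (hderiv t (hsub ht)).mono hsub) hderiv_bound
  rw [add_sub_cancel_left] at hmv
  have : L * ‖f a‖ < L * ε := calc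
    L * ‖f a‖ = ‖L • f a‖ := by rw [norm_smul, Real.norm_of_nonneg hL0.le]
    _ = ‖x (a + L) - x a - (x (a + L) - x a - L • f a)‖ := by rw [sub_sub_cancel]
    _ ≤ ‖x (a + L) - x a‖ + ‖x (a + L) - x a - L • f a‖ := norm_sub_le _ _
    _ < L * ε := by linarith [mul_pos hL0 hε]
  exact lt_of_mul_lt_mul_left this hL0.le

end

/-- Barbalat Lemma extension. -/
theorem barbalat_extension (n : ℕ) (x f g : ℝ → EuclideanSpace ℝ (Fin n))
    (k_c : EuclideanSpace ℝ (Fin n))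
    (hderiv : ∀ t ∈ Set.Ici (0 : ℝ), HasDerivWithinAt x (f t + g t) (Set.Ici 0) t)
    (hf : UniformContinuousOn f (Set.Ici 0))
    (hx : Tendsto x atTop (nhds k_c))
    (hg : Tendsto g atTop (nhds 0)) :
    Tendsto (fun t => f t + g t) atTop (nhds 0) := by
  simpa using (tendsto_nhds_zero_of_hasDerivWithinAt_add_of_uniformContinuousOn
    hderiv hf hx hg).add hg
end
end

section
/- Let R, R̂ ∈ SO(3), P ∈ ℝ³, p₁,…,pₙ ∈ ℝ³, s₁,…,sₙ > 0, s_T = Σᵢ sᵢ, p_c = (1/s_T)·Σᵢ sᵢ pᵢ, M = Σᵢ sᵢ pᵢpᵢᵀ − s_T p_c p_cᵀ, yᵢ = R(pᵢ − P), and R̃_o = R̂ᵀR. Then Υ(R̃_o M) = Σᵢ (sᵢ/2)·((pᵢ − p_c) × (R̂ᵀyᵢ)). -/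
open Matrix Filter

noncomputable section

def UpsL : Matrix (Fin 3) (Fin 3) ℝ →ₗ[ℝ] (Fin 3 → ℝ) where
  toFun := Upsilon
  map_add' A B := by funext i; fin_cases i <;> simp [Upsilon, Pa, vex] <;> ring
  map_smul' c A := by funext i; fin_cases i <;> simp [Upsilon, Pa, vex] <;> ring

lemma Upsilon_mul_vecMulVec (Q : Matrix (Fin 3) (Fin 3) ℝ) (v w : Fin 3 → ℝ) :
    Upsilon (Q * vecMulVec v w) = (1/2 : ℝ) • crossProduct w (Q *ᵥ v) := by
  funext i; fin_cases i <;>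
    simp [Upsilon, Pa, vex, crossProduct, Matrix.mul_apply, mulVec, vecMulVec, dotProduct,
      Fin.sum_univ_three] <;> ring

theorem Upsilon_RM_cross_identity (n : ℕ)
    (R Rhat : Matrix (Fin 3) (Fin 3) ℝ) (hR : SO3 R) (hRhat : SO3 Rhat)
    (P : Fin 3 → ℝ) (p : Fin n → Fin 3 → ℝ)
    (s : Fin n → ℝ) (hs : ∀ i, 0 < s i)
    (sT : ℝ) (hsT : sT = ∑ i, s i)
    (pc : Fin 3 → ℝ) (hpc : pc = (1 / sT) • ∑ i, s i • p i)
    (M : Matrix (Fin 3) (Fin 3) ℝ)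
    (hM : M = ∑ i, s i • vecMulVec (p i) (p i) - sT • vecMulVec pc pc)
    (y : Fin n → Fin 3 → ℝ) (hy : ∀ i, y i = R *ᵥ (p i - P)) :
    Upsilon ((Rhatᵀ * R) * M)
      = ∑ i, (s i / 2) • crossProduct (p i - pc) (Rhatᵀ *ᵥ y i) := by

  set Q := Rhatᵀ * R with hQ
  have hy' : ∀ i, Rhatᵀ *ᵥ y i = Q *ᵥ (p i - P) := fun i => by
    rw [hy i, Matrix.mulVec_mulVec]
  have hL : Upsilon (Q * M)
      = ∑ i, (s i / 2) • crossProduct (p i) (Q *ᵥ p i)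
        - (sT / 2) • crossProduct pc (Q *ᵥ pc) := by
    rw [hM, Matrix.mul_sub, Matrix.mul_sum]
    simp only [Matrix.mul_smul]
    rw [show Upsilon = ⇑UpsL from rfl, map_sub, map_sum]
    simp only [LinearMap.map_smul]
    simp only [show ⇑UpsL = Upsilon from rfl, Upsilon_mul_vecMulVec, smul_smul, mul_one_div]
  rw [hL]
  simp only [hy']
  rcases Nat.eq_zero_or_pos n with hn | hn
  · subst hn
    simp [hpc, hsT]
  have hsT0 : sT ≠ 0 := by
    rw [hsT]
    exact ne_of_gt (Finset.sum_pos (fun i _ => hs i) (Finset.univ_nonempty_iff.2 ⟨⟨0, hn⟩⟩))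
  have hsum : ∑ i, s i • p i = sT • pc := by
    rw [hpc, smul_smul, mul_one_div, div_self hsT0, one_smul]
  have expand : ∀ i, (s i / 2) • crossProduct (p i - pc) (Q *ᵥ (p i - P))
      = (s i / 2) • crossProduct (p i) (Q *ᵥ p i)
        - (s i / 2) • crossProduct (p i) (Q *ᵥ P)
        - (s i / 2) • crossProduct pc (Q *ᵥ p i)
        + (s i / 2) • crossProduct pc (Q *ᵥ P) := by
    intro i
    have h1 : crossProduct (p i - pc) = crossProduct (p i) - crossProduct pc :=
      map_sub _ _ _
    rw [h1, Matrix.mulVec_sub, LinearMap.sub_apply, map_sub, map_sub]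
    module
  simp only [expand]
  rw [Finset.sum_add_distrib, Finset.sum_sub_distrib, Finset.sum_sub_distrib]
  have e1 : ∑ i, (s i / 2) • crossProduct (p i) (Q *ᵥ P)
      = (sT / 2) • crossProduct pc (Q *ᵥ P) := by
    have h2 : (crossProduct.flip (Q *ᵥ P)) (∑ i, s i • p i)
        = ∑ i, s i • crossProduct (p i) (Q *ᵥ P) := by
      rw [map_sum]
      exact Finset.sum_congr rfl fun i _ => by rw [LinearMap.map_smul]; rfl
    calc ∑ i, (s i / 2) • crossProduct (p i) (Q *ᵥ P)
        = (1/2 : ℝ) • ∑ i, s i • crossProduct (p i) (Q *ᵥ P) := by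
          rw [Finset.smul_sum]
          exact Finset.sum_congr rfl fun i _ => by rw [smul_smul]; congr 1; ring
      _ = (1/2 : ℝ) • (sT • crossProduct pc (Q *ᵥ P)) := by
          rw [← h2, hsum, LinearMap.map_smul]; rfl
      _ = (sT / 2) • crossProduct pc (Q *ᵥ P) := by rw [smul_smul]; congr 1; ring
  have e2 : ∑ i, (s i / 2) • crossProduct pc (Q *ᵥ p i)
      = (sT / 2) • crossProduct pc (Q *ᵥ pc) := by
    have h2 : ((crossProduct pc).comp Q.mulVecLin) (∑ i, s i • p i)
        = ∑ i, s i • crossProduct pc (Q *ᵥ p i) := by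
      rw [map_sum]
      exact Finset.sum_congr rfl fun i _ => by rw [LinearMap.map_smul]; rfl
    calc ∑ i, (s i / 2) • crossProduct pc (Q *ᵥ p i)
        = (1/2 : ℝ) • ∑ i, s i • crossProduct pc (Q *ᵥ p i) := by
          rw [Finset.smul_sum]
          exact Finset.sum_congr rfl fun i _ => by rw [smul_smul]; congr 1; ring
      _ = (1/2 : ℝ) • (sT • crossProduct pc (Q *ᵥ pc)) := by
          rw [← h2, hsum, LinearMap.map_smul]; rfl
      _ = (sT / 2) • crossProduct pc (Q *ᵥ pc) := by rw [smul_smul]; congr 1; ring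
  have e3 : ∑ i, (s i / 2) • crossProduct pc (Q *ᵥ P)
      = (sT / 2) • crossProduct pc (Q *ᵥ P) := by
    rw [← Finset.sum_smul, hsT, ← Finset.sum_div]
  rw [e1, e2, e3]
  abel
end
end

section
/- Let p₁,…,pₙ ∈ ℝ³ (n ≥ 3) be points that do not all lie on a single line, let s₁,…,sₙ > 0, s_T = Σᵢ sᵢ, p_c = (1/s_T)·Σᵢ sᵢ pᵢ, and M = Σᵢ sᵢ (pᵢ − p_c)(pᵢ − p_c)ᵀ. Then M is symmetric positive semidefinite with rank(M) ≥ 2, and consequently M̄ = Tr(M)·I₃ − M is symmetric positive definite. -/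
open Matrix Filter

noncomputable section

/-- The points `p i` all lie on a common affine line of `ℝ³`. -/
def OnCommonLine (n : ℕ) (p : Fin n → Fin 3 → ℝ) : Prop :=
  ∃ a d : Fin 3 → ℝ, ∀ i, ∃ c : ℝ, p i = a + c • d

/-! With `vᵢ = pᵢ - p_c`, `M = ∑ sᵢ vᵢ vᵢᵀ = Bᵀ B` where `B` has rows `√sᵢ vᵢ`, so `M` is positive
semidefinite and `rank M = rank B = dim span {vᵢ}`. This span contains every difference `pᵢ - pⱼ`,
so it has dimension at least 2 when the points are not collinear. By Lagrange's identity
`xᵀ (Tr M • I - M) x = ∑ sᵢ ‖vᵢ × x‖²`, which vanishes only if every `vᵢ` is parallel to `x`;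
as the `vᵢ` span a plane, this forces `x = 0`. -/

open Module Submodule Set

lemma Submodule.span_range_smul_of_ne_zero {ι K V : Type*} [DivisionRing K] [AddCommGroup V]
    [Module K V] {c : ι → K} (hc : ∀ i, c i ≠ 0) (v : ι → V) :
    span K (range fun i => c i • v i) = span K (range v) := by
  apply le_antisymm <;> rw [span_le] <;> rintro _ ⟨i, rfl⟩
  · exact smul_mem _ _ (subset_span ⟨i, rfl⟩)
  · simpa [smul_smul, hc i] using smul_mem _ (c i)⁻¹ (subset_span (R := K) ⟨i, rfl⟩ :
      c i • v i ∈ span K (range fun i => c i • v i))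

lemma mem_span_singleton_of_crossProduct_eq_zero {K : Type*} [Field K] {v x : Fin 3 → K}
    (hx : x ≠ 0) (h : v ⨯₃ x = 0) : v ∈ span K {x} := by
  have : ¬LinearIndependent K ![x, v] := by
    rw [← crossProduct_ne_zero_iff_linearIndependent, ← cross_anticomm, h, neg_zero, not_not]
  obtain ⟨c, hc⟩ := not_forall_not.1 (mt (LinearIndependent.pair_iff' hx).2 this)
  exact mem_span_singleton.2 ⟨c, hc⟩

lemma onCommonLine_iff_collinear {n : ℕ} (p : Fin n → Fin 3 → ℝ) :
    OnCommonLine n p ↔ Collinear ℝ (range p) := by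
  simp [OnCommonLine, collinear_iff_exists_forall_eq_smul_vadd, add_comm]

lemma two_le_finrank_span_sub_of_not_collinear {ι K V : Type*} [DivisionRing K]
    [AddCommGroup V] [Module K V] [FiniteDimensional K V] {p : ι → V}
    (hp : ¬Collinear K (range p)) (c : V) :
    2 ≤ finrank K (span K (range fun i => p i - c)) := by
  have hle : vectorSpan K (range p) ≤ span K (range fun i => p i - c) := by
    rw [vectorSpan_def, span_le]
    rintro _ ⟨_, ⟨i, rfl⟩, _, ⟨j, rfl⟩, rfl⟩
    have hi : p i - c ∈ span K (range fun i => p i - c) := subset_span ⟨i, rfl⟩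
    have hj : p j - c ∈ span K (range fun i => p i - c) := subset_span ⟨j, rfl⟩
    simpa using sub_mem hi hj
  rw [collinear_iff_finrank_le_one, not_le] at hp
  exact hp.trans_le (finrank_mono hle)

section WeightedScatter

variable {ι m : Type*} [Fintype ι]

def weightedScatter (s : ι → ℝ) (v : ι → m → ℝ) : Matrix m m ℝ :=
  ∑ i, s i • vecMulVec (v i) (v i)

lemma weightedScatter_eq_transpose_mul_self {s : ι → ℝ} (hs : ∀ i, 0 ≤ s i) (v : ι → m → ℝ) :
    weightedScatter s v = (of fun i => √(s i) • v i)ᵀ * of fun i => √(s i) • v i := by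
  ext a b
  simp only [weightedScatter, Matrix.sum_apply, mul_apply, Matrix.smul_apply, vecMulVec_apply,
    transpose_apply, of_apply, Pi.smul_apply, smul_eq_mul]
  refine Finset.sum_congr rfl fun i _ => ?_
  linear_combination (v i a * v i b) * (Real.mul_self_sqrt (hs i)).symm

variable [Fintype m]

lemma dotProduct_weightedScatter_mulVec (s : ι → ℝ) (v : ι → m → ℝ) (x : m → ℝ) :
    x ⬝ᵥ (weightedScatter s v *ᵥ x) = ∑ i, s i * (v i ⬝ᵥ x) ^ 2 := by
  simp only [weightedScatter, sum_mulVec, smul_mulVec, vecMulVec_mulVec, dotProduct_sum,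
    dotProduct_smul]
  refine Finset.sum_congr rfl fun i _ => ?_
  simp [dotProduct_comm x, sq]

lemma trace_weightedScatter (s : ι → ℝ) (v : ι → m → ℝ) :
    trace (weightedScatter s v) = ∑ i, s i * (v i ⬝ᵥ v i) := by
  simp [weightedScatter, trace_sum, trace_smul, trace_vecMulVec]

lemma posSemidef_weightedScatter {s : ι → ℝ} (hs : ∀ i, 0 ≤ s i) (v : ι → m → ℝ) :
    (weightedScatter s v).PosSemidef := by
  rw [weightedScatter_eq_transpose_mul_self hs, ← conjTranspose_eq_transpose_of_trivial]
  exact posSemidef_conjTranspose_mul_self _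

lemma rank_weightedScatter {s : ι → ℝ} (hs : ∀ i, 0 < s i) (v : ι → m → ℝ) :
    (weightedScatter s v).rank = finrank ℝ (span ℝ (range v)) := by
  rw [weightedScatter_eq_transpose_mul_self (fun i => (hs i).le), rank_transpose_mul_self,
    rank_eq_finrank_span_row]
  exact congrArg (fun W : Submodule ℝ (m → ℝ) => finrank ℝ W)
    (span_range_smul_of_ne_zero (fun i => (Real.sqrt_pos.2 (hs i)).ne') v)

lemma dotProduct_trace_smul_one_sub_weightedScatter_mulVec
    (s : ι → ℝ) (v : ι → Fin 3 → ℝ) (x : Fin 3 → ℝ) :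
    x ⬝ᵥ ((trace (weightedScatter s v) • 1 - weightedScatter s v) *ᵥ x) =
      ∑ i, s i * (v i ⨯₃ x ⬝ᵥ v i ⨯₃ x) := by
  rw [sub_mulVec, dotProduct_sub, smul_mulVec, one_mulVec, dotProduct_smul, smul_eq_mul,
    dotProduct_weightedScatter_mulVec, trace_weightedScatter, Finset.sum_mul,
    ← Finset.sum_sub_distrib]
  refine Finset.sum_congr rfl fun i _ => ?_
  rw [cross_dot_cross, dotProduct_comm x (v i)]
  ring

lemma posDef_trace_smul_one_sub_weightedScatter {s : ι → ℝ}
    (hs : ∀ i, 0 < s i) {v : ι → Fin 3 → ℝ} (hv : 2 ≤ finrank ℝ (span ℝ (range v))) :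
    (trace (weightedScatter s v) • 1 - weightedScatter s v).PosDef := by
  have hherm : (trace (weightedScatter s v) • 1 - weightedScatter s v).IsHermitian :=
    (isHermitian_one.smul (IsSelfAdjoint.all _)).sub
      (posSemidef_weightedScatter (fun i => (hs i).le) v).isHermitian
  refine posDef_iff_dotProduct_mulVec.2 ⟨hherm, fun x hx => ?_⟩
  rw [star_trivial, dotProduct_trace_smul_one_sub_weightedScatter_mulVec]
  obtain ⟨i, hi⟩ : ∃ i, v i ⨯₃ x ≠ 0 := by
    by_contra! h
    have hline : span ℝ (range v) ≤ span ℝ {x} :=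
      span_le.2 (range_subset_iff.2 fun i => mem_span_singleton_of_crossProduct_eq_zero hx (h i))
    have := (finrank_mono hline).trans (finrank_span_singleton hx).le
    omega
  exact Finset.sum_pos' (fun j _ => mul_nonneg (hs j).le (dotProduct_self_star_nonneg _))
    ⟨i, Finset.mem_univ i, mul_pos (hs i) (dotProduct_self_star_pos_iff.2 hi)⟩

end WeightedScatter

theorem weighted_covariance_posdef_general (n : ℕ)
    (p : Fin n → Fin 3 → ℝ) (hline : ¬ OnCommonLine n p)
    (s : Fin n → ℝ) (hs : ∀ i, 0 < s i)
    (pc : Fin 3 → ℝ)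
    (M : Matrix (Fin 3) (Fin 3) ℝ)
    (hM : M = ∑ i, s i • vecMulVec (p i - pc) (p i - pc)) :
    M.IsSymm ∧ M.PosSemidef ∧ 2 ≤ M.rank ∧
    (Matrix.trace M • (1 : Matrix (Fin 3) (Fin 3) ℝ) - M).IsHermitian ∧
    (Matrix.trace M • (1 : Matrix (Fin 3) (Fin 3) ℝ) - M).PosDef := by
  replace hM : M = weightedScatter s (fun i => p i - pc) := hM
  subst hM
  have hspan := two_le_finrank_span_sub_of_not_collinear
    ((onCommonLine_iff_collinear p).not.1 hline) pc
  have hpsd := posSemidef_weightedScatter (fun i => (hs i).le) (fun i => p i - pc)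
  have hpd := posDef_trace_smul_one_sub_weightedScatter hs hspan
  exact ⟨isHermitian_iff_isSymm.1 hpsd.isHermitian, hpsd,
    (rank_weightedScatter hs fun i => p i - pc).symm ▸ hspan, hpd.isHermitian, hpd⟩

theorem weighted_covariance_posdef (n : ℕ) (hn : 3 ≤ n)
    (p : Fin n → Fin 3 → ℝ) (hline : ¬ OnCommonLine n p)
    (s : Fin n → ℝ) (hs : ∀ i, 0 < s i)
    (sT : ℝ) (hsT : sT = ∑ i, s i)
    (pc : Fin 3 → ℝ) (hpc : pc = (1 / sT) • ∑ i, s i • p i)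
    (M : Matrix (Fin 3) (Fin 3) ℝ)
    (hM : M = ∑ i, s i • vecMulVec (p i - pc) (p i - pc)) :
    M.IsSymm ∧ M.PosSemidef ∧ 2 ≤ M.rank ∧
    (Matrix.trace M • (1 : Matrix (Fin 3) (Fin 3) ℝ) - M).IsHermitian ∧
    (Matrix.trace M • (1 : Matrix (Fin 3) (Fin 3) ℝ) - M).PosDef :=
  weighted_covariance_posdef_general n p hline s hs pc M hM
end
end

section
/- Let M ∈ ℝ^{3×3} be a fixed matrix and let R̃ : ℝ → ℝ^{3×3} and ω : ℝ → ℝ³ be such that R̃ is differentiable with Ṙ̃(t) = −[ω(t)]× R̃(t). Then the function t ↦ (1/4)·Tr((I₃ − R̃(t))·M) is differentiable with derivative −(1/2)·Υ(R̃(t)M)ᵀ ω(t). -/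
open Matrix Filter

noncomputable section

/-- Entrywise derivative of a matrix-valued function. -/
def HasMatDerivAt (R : ℝ → Matrix (Fin 3) (Fin 3) ℝ)
    (R' : Matrix (Fin 3) (Fin 3) ℝ) (t : ℝ) : Prop :=
  ∀ i j, HasDerivAt (fun s => R s i j) (R' i j) t

theorem Matrix.hasDerivAt_trace_mul {𝕜 n : Type*} [NontriviallyNormedField 𝕜] [Fintype n]
    {R : 𝕜 → Matrix n n 𝕜} {R' : Matrix n n 𝕜} {t : 𝕜} (M : Matrix n n 𝕜)
    (hR : ∀ i j, HasDerivAt (fun s => R s i j) (R' i j) t) :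
    HasDerivAt (fun s => trace (R s * M)) (trace (R' * M)) t := by
  simp only [trace, diag, mul_apply]
  exact HasDerivAt.fun_sum fun i _ => HasDerivAt.fun_sum fun k _ => (hR i k).mul_const _

theorem trace_skew_mul (ω : Fin 3 → ℝ) (A : Matrix (Fin 3) (Fin 3) ℝ) :
    trace (skew ω * A) = -2 * (Upsilon A ⬝ᵥ ω) := by
  simp only [trace, diag, skew, Upsilon, vex, Pa, mul_apply, dotProduct, Fin.sum_univ_three,
    Matrix.smul_apply, Matrix.sub_apply, transpose_apply, of_apply, cons_val', cons_val_zero,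
    cons_val_one, cons_val_two, head_cons, tail_cons, empty_val', cons_val_fin_one,
    head_fin_const, smul_eq_mul]
  ring

theorem deriv_trace_lyapunov (M : Matrix (Fin 3) (Fin 3) ℝ)
    (Rt : ℝ → Matrix (Fin 3) (Fin 3) ℝ) (ω : ℝ → Fin 3 → ℝ)
    (hR : ∀ t, HasMatDerivAt Rt (-(skew (ω t) * Rt t)) t) :
    ∀ t, HasDerivAt (fun s => Matrix.trace ((1 - Rt s) * M) / 4)
      (-(1 / 2) * (Upsilon (Rt t * M) ⬝ᵥ ω t)) t := by
  intro t
  have hsplit : (fun s => trace ((1 - Rt s) * M) / 4) =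
      fun s => (trace M - trace (Rt s * M)) / 4 := by
    funext s
    rw [Matrix.sub_mul, one_mul, trace_sub]
  rw [hsplit]
  refine (((hasDerivAt_trace_mul M (hR t)).const_sub (trace M)).div_const 4).congr_deriv ?_
  rw [Matrix.neg_mul, trace_neg, Matrix.mul_assoc, trace_skew_mul]
  ring
end
end

section
/- Let g > 0, m > 0, e₃ = (0,0,1)ᵀ, and F = (f₁,f₂,f₃)ᵀ ∈ ℝ³ such that F ≠ (0,0,c)ᵀ for every c ≥ g. Set ℑ = m·‖g e₃ − F‖, q_{d0} = √( (m/(2ℑ))·(g − f₃) + 1/2 ) and q_d = ( (m/(2ℑ q_{d0}))·f₂, −(m/(2ℑ q_{d0}))·f₁, 0 )ᵀ. Then ℑ > 0, q_{d0} is well defined and strictly positive, and Q_d = (q_{d0}, q_dᵀ)ᵀ is a unit quaternion: q_{d0}² + ‖q_d‖² = 1. -/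
open Matrix Filter

noncomputable section

/-- The basis vector `e₃ = (0,0,1)ᵀ`. -/
def e3 : Fin 3 → ℝ := ![0, 0, 1]

/-! Write `d = g - f₃` and `r = ‖g e₃ - F‖`, so that `ℑ = m r` and `m` cancels everywhere:
`q_{d0}² = (r + d) / (2r)` and `‖q_d‖² = (f₁² + f₂²) / (4 r² q_{d0}²) = (r - d) / (2r)`, using
`f₁² + f₂² = r² - d²`. The hypothesis on `F` says exactly that `f₁ ≠ 0`, `f₂ ≠ 0` or `d > 0`, which is
what makes `r + d > 0`. -/

theorem sqnorm_smul_e3_sub (g : ℝ) (F : Fin 3 → ℝ) :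
    sqnorm (g • e3 - F) = F 0 ^ 2 + F 1 ^ 2 + (g - F 2) ^ 2 := by
  simp [sqnorm, e3, Fin.sum_univ_three]

theorem sqnorm_vec_three (x y z : ℝ) : sqnorm ![x, y, z] = x ^ 2 + y ^ 2 + z ^ 2 := by
  simp [sqnorm, Fin.sum_univ_three]

theorem ne_zero_or_ne_zero_or_lt_of_forall_ne {g : ℝ} {F : Fin 3 → ℝ}
    (hF : ∀ c : ℝ, g ≤ c → F ≠ ![0, 0, c]) : F 0 ≠ 0 ∨ F 1 ≠ 0 ∨ F 2 < g := by
  by_contra! h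
  obtain ⟨h0, h1, h2⟩ := h
  exact hF (F 2) h2 (by ext i; fin_cases i <;> simp [h0, h1])

theorem neg_sqrt_sq_add_sq_add_sq_lt {a b d : ℝ} (h : a ≠ 0 ∨ b ≠ 0 ∨ 0 < d) :
    -√(a ^ 2 + b ^ 2 + d ^ 2) < d := by
  rcases h with ha | hb | hd
  · exact Real.neg_sqrt_lt_of_sq_lt (by nlinarith [sq_pos_of_ne_zero ha, sq_nonneg b])
  · exact Real.neg_sqrt_lt_of_sq_lt (by nlinarith [sq_pos_of_ne_zero hb, sq_nonneg a])
  · linarith [Real.sqrt_nonneg (a ^ 2 + b ^ 2 + d ^ 2)]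

theorem sqrt_sq_add_sq_add_sq_pos {a b d : ℝ} (h : a ≠ 0 ∨ b ≠ 0 ∨ 0 < d) :
    0 < √(a ^ 2 + b ^ 2 + d ^ 2) := by
  have hd : d ≤ √(a ^ 2 + b ^ 2 + d ^ 2) :=
    Real.le_sqrt_of_sq_le (by nlinarith [sq_nonneg a, sq_nonneg b])
  linarith [neg_sqrt_sq_add_sq_add_sq_lt h]

theorem sq_add_div_sq_add_div_sq_eq_one {a b d r q : ℝ} (hr : r ^ 2 = a ^ 2 + b ^ 2 + d ^ 2)
    (hr0 : 0 < r) (hrd : 0 < r + d) (hq : q ^ 2 = (r + d) / (2 * r)) :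
    q ^ 2 + (b / (2 * r * q)) ^ 2 + (a / (2 * r * q)) ^ 2 = 1 := by
  rw [div_pow, div_pow, mul_pow, hq]
  field_simp
  linear_combination -hr

theorem desired_quaternion_unit_general (g m : ℝ) (hm : 0 < m)
    (F : Fin 3 → ℝ) (hF : ∀ c : ℝ, g ≤ c → F ≠ ![0, 0, c])
    (Im qd0 : ℝ) (qd : Fin 3 → ℝ)
    (hIm : Im = m * Real.sqrt (sqnorm (g • e3 - F)))
    (hqd0 : qd0 = Real.sqrt (m / (2 * Im) * (g - F 2) + 1 / 2))
    (hqd : qd = ![m / (2 * Im * qd0) * F 1, -(m / (2 * Im * qd0) * F 0), 0]) :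
    0 < Im ∧ 0 ≤ m / (2 * Im) * (g - F 2) + 1 / 2 ∧ 0 < qd0 ∧
    qd0 ^ 2 + sqnorm qd = 1 := by
  rw [sqnorm_smul_e3_sub] at hIm
  have hnondeg : F 0 ≠ 0 ∨ F 1 ≠ 0 ∨ 0 < g - F 2 :=
    (ne_zero_or_ne_zero_or_lt_of_forall_ne hF).imp_right (Or.imp_right sub_pos.2)
  set r := √(F 0 ^ 2 + F 1 ^ 2 + (g - F 2) ^ 2)
  have hr0 : 0 < r := sqrt_sq_add_sq_add_sq_pos hnondeg
  have hrd : 0 < r + (g - F 2) := by linarith [neg_sqrt_sq_add_sq_add_sq_lt hnondeg]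
  have hr2 : r ^ 2 = F 0 ^ 2 + F 1 ^ 2 + (g - F 2) ^ 2 := Real.sq_sqrt (by positivity)
  have hhalf : m / (2 * Im) * (g - F 2) + 1 / 2 = (r + (g - F 2)) / (2 * r) := by
    rw [hIm]; field_simp; ring
  have hhalf_pos : 0 < m / (2 * Im) * (g - F 2) + 1 / 2 := by rw [hhalf]; positivity
  have hq2 : qd0 ^ 2 = (r + (g - F 2)) / (2 * r) := by
    rw [hqd0, Real.sq_sqrt hhalf_pos.le, hhalf]
  have hcoef : m / (2 * Im * qd0) = 1 / (2 * r * qd0) := by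
    rw [hIm]; field_simp
  refine ⟨by rw [hIm]; positivity, hhalf_pos.le, by rw [hqd0]; exact Real.sqrt_pos.2 hhalf_pos, ?_⟩
  calc qd0 ^ 2 + sqnorm qd = qd0 ^ 2 + (F 1 / (2 * r * qd0)) ^ 2 + (F 0 / (2 * r * qd0)) ^ 2 := by
        rw [hqd, hcoef, sqnorm_vec_three]; ring
    _ = 1 := sq_add_div_sq_add_div_sq_eq_one hr2 hr0 hrd hq2

theorem desired_quaternion_unit (g m : ℝ) (hg : 0 < g) (hm : 0 < m)
    (F : Fin 3 → ℝ) (hF : ∀ c : ℝ, g ≤ c → F ≠ ![0, 0, c])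
    (Im qd0 : ℝ) (qd : Fin 3 → ℝ)
    (hIm : Im = m * Real.sqrt (sqnorm (g • e3 - F)))
    (hqd0 : qd0 = Real.sqrt (m / (2 * Im) * (g - F 2) + 1 / 2))
    (hqd : qd = ![m / (2 * Im * qd0) * F 1, -(m / (2 * Im * qd0) * F 0), 0]) :
    0 < Im ∧ 0 ≤ m / (2 * Im) * (g - F 2) + 1 / 2 ∧ 0 < qd0 ∧
    qd0 ^ 2 + sqnorm qd = 1 :=
  desired_quaternion_unit_general g m hm F hF Im qd0 qd hIm hqd0 hqd
end
end

section
/- Let g > 0, m > 0, e₃ = (0,0,1)ᵀ, and F = (f₁,f₂,f₃)ᵀ ∈ ℝ³ such that F ≠ (0,0,c)ᵀ for every c ≥ g. Set ℑ = m·‖g e₃ − F‖, q_{d0} = √( (m/(2ℑ))·(g − f₃) + 1/2 ), q_d = ( (m/(2ℑ q_{d0}))·f₂, −(m/(2ℑ q_{d0}))·f₁, 0 )ᵀ, and R_d = (q_{d0}² − ‖q_d‖²)·I₃ + 2 q_d q_dᵀ − 2 q_{d0} [q_d]×. Then R_d ∈ SO(3) and g e₃ − (ℑ/m)·R_dᵀ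 e₃ = F. -/
open Matrix Filter

noncomputable section

lemma quat_SO3 (u x y : ℝ) (h1 : u^2 + x^2 + y^2 = 1) :
    SO3 !![u^2 + x^2 - y^2, 2*x*y, -(2*u*y);
      2*x*y, u^2 - x^2 + y^2, 2*u*x;
      2*u*y, -(2*u*x), u^2 - x^2 - y^2] := by
  have hT : (!![u^2 + x^2 - y^2, 2*x*y, -(2*u*y);
      2*x*y, u^2 - x^2 + y^2, 2*u*x;
      2*u*y, -(2*u*x), u^2 - x^2 - y^2])ᵀ
      = !![u^2 + x^2 - y^2, 2*x*y, 2*u*y;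
      2*x*y, u^2 - x^2 + y^2, -(2*u*x);
      -(2*u*y), 2*u*x, u^2 - x^2 - y^2] := by
    ext i j; fin_cases i <;> fin_cases j <;> rfl
  have key : (u^2 + x^2 + y^2)^2 = 1 := by rw [h1]; norm_num
  refine ⟨?_, ?_, ?_⟩
  · rw [hT, Matrix.mul_fin_three, Matrix.one_fin_three]
    ext i j
    fin_cases i <;> fin_cases j <;> simp [Matrix.vecHead, Matrix.vecTail]
    all_goals try ring
    all_goals try linear_combination key
    all_goals linear_combination (-1 : ℝ) * key
  · rw [hT, Matrix.mul_fin_three, Matrix.one_fin_three]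
    ext i j
    fin_cases i <;> fin_cases j <;> simp [Matrix.vecHead, Matrix.vecTail]
    all_goals try ring
    all_goals try linear_combination key
    all_goals linear_combination (-1 : ℝ) * key
  · rw [Matrix.det_fin_three]
    simp
    linear_combination ((u^2 + x^2 + y^2)^2 + (u^2 + x^2 + y^2) + 1) * h1


theorem desired_rotation_property (g m : ℝ) (hg : 0 < g) (hm : 0 < m)
    (F : Fin 3 → ℝ) (hF : ∀ c : ℝ, g ≤ c → F ≠ ![0, 0, c])
    (Im qd0 : ℝ) (qd : Fin 3 → ℝ) (Rd : Matrix (Fin 3) (Fin 3) ℝ)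
    (hIm : Im = m * Real.sqrt (sqnorm (g • e3 - F)))
    (hqd0 : qd0 = Real.sqrt (m / (2 * Im) * (g - F 2) + 1 / 2))
    (hqd : qd = ![m / (2 * Im * qd0) * F 1, -(m / (2 * Im * qd0) * F 0), 0])
    (hRd : Rd = (qd0 ^ 2 - sqnorm qd) • (1 : Matrix (Fin 3) (Fin 3) ℝ)
      + (2 : ℝ) • vecMulVec qd qd - (2 * qd0) • skew qd) :
    SO3 Rd ∧ g • e3 - (Im / m) • (Rdᵀ *ᵥ e3) = F := by
  obtain ⟨a, ha_def⟩ : ∃ t : ℝ, t = Real.sqrt (sqnorm (g • e3 - F)) := ⟨_, rfl⟩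
  have hs : sqnorm (g • e3 - F) = F 0 ^ 2 + F 1 ^ 2 + (g - F 2) ^ 2 := by
    simp [sqnorm, e3, Fin.sum_univ_three]
  have hs_pos : 0 < sqnorm (g • e3 - F) := by
    rcases lt_or_ge 0 (sqnorm (g • e3 - F)) with h | h
    · exact h
    · exfalso
      have h0 : F 0 = 0 := by nlinarith [sq_nonneg (F 0), sq_nonneg (F 1), sq_nonneg (g - F 2)]
      have h1 : F 1 = 0 := by nlinarith [sq_nonneg (F 0), sq_nonneg (F 1), sq_nonneg (g - F 2)]
      have h2 : F 2 = g := by nlinarith [sq_nonneg (F 0), sq_nonneg (F 1), sq_nonneg (g - F 2)]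
      exact hF g le_rfl (by funext i; fin_cases i <;> simp [h0, h1, h2])
  have ha : 0 < a := ha_def ▸ Real.sqrt_pos.mpr hs_pos
  have ha2 : a ^ 2 = F 0 ^ 2 + F 1 ^ 2 + (g - F 2) ^ 2 := by
    rw [ha_def, Real.sq_sqrt hs_pos.le, hs]
  have hk : 0 < a + (g - F 2) := by
    rcases lt_or_ge 0 (a + (g - F 2)) with h | h
    · exact h
    · exfalso
      have hfg : a ≤ F 2 - g := by linarith
      have h0 : F 0 = 0 := by nlinarith [sq_nonneg (F 0), sq_nonneg (F 1)]
      have h1 : F 1 = 0 := by nlinarith [sq_nonneg (F 0), sq_nonneg (F 1)]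
      have hge : g ≤ F 2 := by linarith
      exact hF (F 2) hge (by funext i; fin_cases i <;> simp [h0, h1])
  have hIm' : Im = m * a := by rw [hIm, ha_def]
  have hImm : m / (2 * Im) = 1 / (2 * a) := by
    rw [hIm']; field_simp
  have heq : 1 / (2 * a) * (g - F 2) + 1 / 2 = (a + (g - F 2)) / (2 * a) := by
    field_simp; ring
  have harg : 0 ≤ 1 / (2 * a) * (g - F 2) + 1 / 2 := by
    rw [heq]; positivity
  have hu2 : qd0 ^ 2 = (a + (g - F 2)) / (2 * a) := by
    rw [hqd0, hImm, Real.sq_sqrt harg, heq]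
  have hu : 0 < qd0 := by
    rw [hqd0]; exact Real.sqrt_pos.mpr (by rw [hImm, heq]; positivity)
  have hu2' : 2 * a * qd0 ^ 2 = a + (g - F 2) := by
    rw [hu2]; field_simp
  have hx : qd 0 = F 1 / (2 * a * qd0) := by
    rw [hqd]; show m / (2 * Im * qd0) * F 1 = _
    rw [hIm']; field_simp
  have hy : qd 1 = -(F 0 / (2 * a * qd0)) := by
    rw [hqd]; show -(m / (2 * Im * qd0) * F 0) = _
    rw [hIm']; field_simp
  have hz : qd 2 = 0 := by rw [hqd]; rfl
  have hx' : 2 * a * qd0 * qd 0 = F 1 := by rw [hx]; field_simp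
  have hy' : 2 * a * qd0 * qd 1 = -(F 0) := by rw [hy]; field_simp
  have h1 : qd0 ^ 2 + (qd 0) ^ 2 + (qd 1) ^ 2 = 1 := by
    rw [hx, hy]
    field_simp
    linear_combination (2*a*qd0^2 + a + g - F 2 - 2*a) * hu2' - ha2
  have hRd' : Rd = !![qd0^2 + qd 0^2 - qd 1^2, 2*qd 0*qd 1, -(2*qd0*qd 1);
      2*qd 0*qd 1, qd0^2 - qd 0^2 + qd 1^2, 2*qd0*qd 0;
      2*qd0*qd 1, -(2*qd0*qd 0), qd0^2 - qd 0^2 - qd 1^2] := by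
    have hsq : sqnorm qd = qd 0^2 + qd 1^2 := by
      simp [sqnorm, Fin.sum_univ_three, hz]
    rw [hRd]
    ext i j
    fin_cases i <;> fin_cases j <;>
      simp [skew, vecMulVec, hsq, hz, Matrix.one_apply] <;> ring
  have hT : Rdᵀ = !![qd0^2 + qd 0^2 - qd 1^2, 2*qd 0*qd 1, 2*qd0*qd 1;
      2*qd 0*qd 1, qd0^2 - qd 0^2 + qd 1^2, -(2*qd0*qd 0);
      -(2*qd0*qd 1), 2*qd0*qd 0, qd0^2 - qd 0^2 - qd 1^2] := by
    rw [hRd']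
    ext i j
    fin_cases i <;> fin_cases j <;> rfl
  constructor
  · rw [hRd']
    exact quat_SO3 qd0 (qd 0) (qd 1) h1
  · have hT : Rdᵀ = !![qd0^2 + qd 0^2 - qd 1^2, 2*qd 0*qd 1, 2*qd0*qd 1;
        2*qd 0*qd 1, qd0^2 - qd 0^2 + qd 1^2, -(2*qd0*qd 0);
        -(2*qd0*qd 1), 2*qd0*qd 0, qd0^2 - qd 0^2 - qd 1^2] := by
      rw [hRd']
      ext i j
      fin_cases i <;> fin_cases j <;> rfl
    have hIma : Im / m = a := by rw [hIm']; field_simp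
    have hmv : Rdᵀ *ᵥ e3 = ![2*qd0*qd 1, -(2*qd0*qd 0), qd0^2 - qd 0^2 - qd 1^2] := by
      rw [hT]
      funext i
      fin_cases i <;> simp [Matrix.mulVec, dotProduct, e3, Fin.sum_univ_three]
    rw [hmv, hIma]
    funext i
    fin_cases i
    · show g * 0 - a * (2*qd0*qd 1) = F 0
      linear_combination -hy'
    · show g * 0 - a * -(2*qd0*qd 0) = F 1
      linear_combination hx'
    · show g * 1 - a * (qd0^2 - qd 0^2 - qd 1^2) = F 2
      linear_combination a * h1 - hu2'
end
end
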